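/- Let N ≥ 1 and let p_1,...,p_{N+1} be reals with 0 ≤ p_1 ≤ ... ≤ p_{N+1}. Define q_j = min(p_j, 1), s_j(n,i) = p_j·n − q_j·i + c_j for arbitrary reals c_j. Let f̃^n_i be the ultradiscrete permanent of the N×N matrix whose (j,m) entry (m = 1,...,N) is |s_j(n + 2(m−1), i)|, and let g̃^n_i be the ultradiscrete permanent of the (N+1)×(N+1) matrix whose (j,m) entry (m = 1,...,N+1) is |s_j(n + 2(m−2), i)|. Then for all real n, i: f̃^n_i + g̃^{n+1}_{i−1} = max( f̃^{n+1}_{i−1} + g̃^n_i − p_{N+1} + q_{N+1} − 2, f̃^{n−1}_{i−1} + g̃^{n+2}_i − p_{N+1} + q_{N+1} ). (This is the equation obtained by formally ultradiscretizing the second Bäcklund transformation of the discrete KdV equation, and it is equivalent to the ultradiscrete KdV Bäcklund transformation f̃^n_i + g̃^{n+1}_{i−1} = max( f̃^{n+1}_{i−1} + g̃^n_i − p_{N+1} − q_{N+1}, f̃^{n−1}_{i−1} + g̃^{n+2}_i − p_{N+1} + q_{N+1} ).) -/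

import Mathlib

/-!
For slopes `0 ≤ b 0 ≤ b 1 ≤ …`, the ultradiscrete permanent of `|a j + (u + 2 m) b j|` is
computed greedily: by an exchange argument the row with the largest slope may be matched with
the last column (if its entry is positive) or with the first one (if it is negative), which
gives the recursion `greedyUperm`. Both sides of the Bäcklund transformation are then maxima
of explicit branches. Two inequalities of discrete-concavity type between `greedyUperm` for the
intercepts at `(n, i)` and at `(n, i - 1)`, proved by induction on the number of rows, show
that the branches of the right-hand side never exceed the left-hand side, and the dichotomy
`q = 1` or `q = p` for the last row shows that the left-hand side is attained.
-/

open Finset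

/-- The ultradiscrete permanent of an `M × M` real matrix:
the maximum over all permutations `π` of `Σ_j a j (π j)`. -/
noncomputable def uperm (M : ℕ) (a : Fin M → Fin M → ℝ) : ℝ :=
  Finset.univ.sup' Finset.univ_nonempty fun π : Equiv.Perm (Fin M) => ∑ j, a j (π j)

open Equiv Fin

section UltradiscretePermanent

variable {M : ℕ}

theorem sum_le_uperm (A : Fin M → Fin M → ℝ) (σ : Perm (Fin M)) :
    ∑ j, A j (σ j) ≤ uperm M A :=
  le_sup' (fun σ : Perm (Fin M) => ∑ j, A j (σ j)) (mem_univ σ)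

theorem uperm_le {A : Fin M → Fin M → ℝ} {z : ℝ} (h : ∀ σ : Perm (Fin M), ∑ j, A j (σ j) ≤ z) :
    uperm M A ≤ z :=
  sup'_le _ _ fun σ _ => h σ

theorem uperm_zero (A : Fin 0 → Fin 0 → ℝ) : uperm 0 A = 0 :=
  le_antisymm (uperm_le fun _ => by simp) (by simpa using sum_le_uperm A 1)

def succAbovePerm (k : Fin (M + 1)) (σ : Perm (Fin M)) : Perm (Fin (M + 1)) :=
  finSuccEquivLast.trans (σ.optionCongr.trans (finSuccEquiv' k).symm)

@[simp]
theorem succAbovePerm_last (k : Fin (M + 1)) (σ : Perm (Fin M)) :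
    succAbovePerm k σ (last M) = k := by
  simp [succAbovePerm]

@[simp]
theorem succAbovePerm_castSucc (k : Fin (M + 1)) (σ : Perm (Fin M)) (j : Fin M) :
    succAbovePerm k σ j.castSucc = k.succAbove (σ j) := by
  simp [succAbovePerm]

theorem exists_succAbovePerm_eq (ρ : Perm (Fin (M + 1))) :
    ∃ σ, succAbovePerm (ρ (last M)) σ = ρ := by
  set e : Perm (Option (Fin M)) :=
    (finSuccEquivLast.symm.trans ρ).trans (finSuccEquiv' (ρ (last M)))
  refine ⟨removeNone e, Equiv.ext fun x => ?_⟩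
  induction x using lastCases with
  | last => simp
  | cast j =>
    have he : ∃ y, e (some j) = some y :=
      Option.ne_none_iff_exists'.mp fun h => by simp [e] at h; exact (castSucc_lt_last j).ne' h
    rw [succAbovePerm_castSucc, ← finSuccEquiv'_symm_some, removeNone_some e he]
    simp [e]

theorem add_uperm_succAbove_le (A : Fin (M + 1) → Fin (M + 1) → ℝ) (k : Fin (M + 1)) :
    A (last M) k + uperm M (fun j m => A j.castSucc (k.succAbove m)) ≤ uperm (M + 1) A := by
  obtain ⟨σ, -, hσ⟩ := exists_mem_eq_sup' univ_nonempty
    fun σ : Perm (Fin M) => ∑ j, A j.castSucc (k.succAbove (σ j))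
  rw [uperm, hσ]
  simpa [Fin.sum_univ_castSucc, add_comm] using sum_le_uperm A (succAbovePerm k σ)

theorem sum_le_add_uperm_succAbove (A : Fin (M + 1) → Fin (M + 1) → ℝ) (ρ : Perm (Fin (M + 1))) :
    ∑ j, A j (ρ j) ≤
      A (last M) (ρ (last M)) + uperm M (fun j m => A j.castSucc ((ρ (last M)).succAbove m)) := by
  obtain ⟨σ, hσ⟩ := exists_succAbovePerm_eq ρ
  conv_lhs => rw [← hσ]
  simpa [Fin.sum_univ_castSucc, add_comm] using
    sum_le_uperm (fun j m => A j.castSucc ((ρ (last M)).succAbove m)) σ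

theorem sum_apply_mul_swap_add {ι R : Type*} [Fintype ι] [DecidableEq ι] [AddCommMonoid R]
    (A : ι → ι → R) (τ : Perm ι) (i l : ι) :
    ∑ j, A j ((τ * swap i l) j) + (A i (τ i) + A l (τ l)) =
      ∑ j, A j (τ j) + (A i (τ l) + A l (τ i)) := by
  rcases eq_or_ne i l with rfl | hil
  · simp
  have split (F : ι → R) : ∑ j, F j = ∑ j ∈ univ \ {i, l}, F j + (F i + F l) := by
    rw [← sum_pair hil, sum_sdiff (subset_univ _)]
  have off : ∀ j ∈ univ \ {i, l}, A j ((τ * swap i l) j) = A j (τ j) := fun j hj => by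
    simp only [mem_sdiff, mem_insert, mem_singleton, not_or] at hj
    rw [Perm.mul_apply, swap_apply_of_ne_of_ne hj.2.1 hj.2.2]
  rw [split, split fun j => A j (τ j), sum_congr rfl off]
  simp only [Perm.mul_apply, swap_apply_left, swap_apply_right]
  abel

theorem sum_le_add_uperm_of_exchange (A : Fin (M + 1) → Fin (M + 1) → ℝ) (τ : Perm (Fin (M + 1)))
    (k : Fin (M + 1)) (h : ∀ j, A (last M) (τ (last M)) + A j k ≤ A (last M) k + A j (τ (last M))) :
    ∑ j, A j (τ j) ≤ A (last M) k + uperm M (fun j m => A j.castSucc (k.succAbove m)) := by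
  set ρ := τ * swap (τ.symm k) (last M)
  have hρ : ρ (last M) = k := by simp [ρ]
  have hswap := sum_apply_mul_swap_add A τ (τ.symm k) (last M)
  rw [apply_symm_apply] at hswap
  calc ∑ j, A j (τ j) ≤ ∑ j, A j (ρ j) := by linarith [h (τ.symm k)]
    _ ≤ _ := hρ ▸ sum_le_add_uperm_succAbove A ρ

end UltradiscretePermanent

theorem abs_add_abs_le_swap_of_nonneg {x y b b' s t : ℝ} (hst : s ≤ t) (hb : |b'| ≤ b)
    (hx : 0 ≤ x + s * b) : |x + s * b| + |y + t * b'| ≤ |x + t * b| + |y + s * b'| := by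
  have hy : |y + t * b'| - |y + s * b'| ≤ (t - s) * |b'| := by
    calc |y + t * b'| - |y + s * b'| ≤ |(y + t * b') - (y + s * b')| := abs_sub_abs_le_abs_sub _ _
      _ = (t - s) * |b'| := by rw [← abs_of_nonneg (sub_nonneg.2 hst), ← abs_mul]; congr 1; ring
  rw [abs_of_nonneg hx]
  linarith [le_abs_self (x + t * b), mul_le_mul_of_nonneg_left hb (sub_nonneg.2 hst)]

theorem abs_add_abs_le_swap_of_nonpos {x y b b' s t : ℝ} (hst : s ≤ t) (hb : |b'| ≤ b)
    (hx : x + t * b ≤ 0) : |x + t * b| + |y + s * b'| ≤ |x + s * b| + |y + t * b'| := by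
  have := abs_add_abs_le_swap_of_nonneg (x := -x) (y := -y) (neg_le_neg hst) hb (by linarith)
  simp only [neg_mul, ← neg_add, abs_neg] at this
  linarith

/-- The row `r` with the largest slope is matched either with the last column or with the first. -/
noncomputable def greedyUperm (a b : ℕ → ℝ) : ℕ → ℝ → ℝ
  | 0, _ => 0
  | r + 1, u => max (a r + (u + 2 * r) * b r + greedyUperm a b r u)
      (-(a r + u * b r) + greedyUperm a b r (u + 2))

@[simp]
theorem greedyUperm_zero (a b : ℕ → ℝ) (u : ℝ) : greedyUperm a b 0 u = 0 := rfl

theorem greedyUperm_succ (a b : ℕ → ℝ) (r : ℕ) (u : ℝ) :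
    greedyUperm a b (r + 1) u = max (a r + (u + 2 * r) * b r + greedyUperm a b r u)
      (-(a r + u * b r) + greedyUperm a b r (u + 2)) := rfl

section AbsMatrix

variable (a b : ℕ → ℝ) (M : ℕ) (u : ℝ)

theorem uperm_abs_succAbove_last :
    uperm M (fun j m =>
      |a (j.castSucc : ℕ) + (u + 2 * ((last M).succAbove m : ℕ)) * b (j.castSucc : ℕ)|) =
    uperm M (fun j m => |a j + (u + 2 * (m : ℕ)) * b j|) := by
  simp

theorem uperm_abs_succAbove_zero :
    uperm M (fun j m =>
      |a (j.castSucc : ℕ) + (u + 2 * ((0 : Fin (M + 1)).succAbove m : ℕ)) * b (j.castSucc : ℕ)|) =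
    uperm M (fun j m => |a j + (u + 2 + 2 * (m : ℕ)) * b j|) := by
  congr! 4
  simp only [succAbove_zero, val_succ, val_castSucc]
  push_cast
  ring

theorem sum_abs_le_max_uperm (hb0 : ∀ j, 0 ≤ b j) (hb : Monotone b) (τ : Perm (Fin (M + 1))) :
    ∑ j : Fin (M + 1), |a j + (u + 2 * (τ j : ℕ)) * b j| ≤
      max (a M + (u + 2 * M) * b M + uperm M (fun j m => |a j + (u + 2 * (m : ℕ)) * b j|))
        (-(a M + u * b M) + uperm M (fun j m => |a j + (u + 2 + 2 * (m : ℕ)) * b j|)) := by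
  set A : Fin (M + 1) → Fin (M + 1) → ℝ := fun j m => |a j + (u + 2 * (m : ℕ)) * b j|
  set c : ℝ := ((τ (last M) : ℕ) : ℝ)
  have hc : c ≤ M := Nat.cast_le.mpr (τ (last M)).is_le
  have hc0 : 0 ≤ c := Nat.cast_nonneg _
  have hbj (j : Fin (M + 1)) : |b j| ≤ b M := (abs_of_nonneg (hb0 j)).trans_le (hb j.is_le)
  rcases le_total 0 (a M + (u + 2 * c) * b M) with hpos | hneg
  · refine (sum_le_add_uperm_of_exchange A τ (last M) fun j => ?_).trans ?_
    · simpa [A] using abs_add_abs_le_swap_of_nonneg (y := a j) (s := u + 2 * c) (t := u + 2 * M)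
        (by linarith) (hbj j) hpos
    · have : 0 ≤ a M + (u + 2 * M) * b M := by nlinarith [hb0 M]
      rw [uperm_abs_succAbove_last]
      simp [A, abs_of_nonneg this]
  · refine (sum_le_add_uperm_of_exchange A τ 0 fun j => ?_).trans ?_
    · simpa [A] using abs_add_abs_le_swap_of_nonpos (y := a j) (s := u) (t := u + 2 * c)
        (by linarith) (hbj j) hneg
    · have : a M + u * b M ≤ 0 := by nlinarith [hb0 M]
      rw [uperm_abs_succAbove_zero]
      simp [A, abs_of_nonpos this]

theorem max_uperm_le_uperm_abs :
    max (a M + (u + 2 * M) * b M + uperm M (fun j m => |a j + (u + 2 * (m : ℕ)) * b j|))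
        (-(a M + u * b M) + uperm M (fun j m => |a j + (u + 2 + 2 * (m : ℕ)) * b j|)) ≤
      uperm (M + 1) (fun j m => |a j + (u + 2 * (m : ℕ)) * b j|) := by
  set A : Fin (M + 1) → Fin (M + 1) → ℝ := fun j m => |a j + (u + 2 * (m : ℕ)) * b j|
  have h_last := add_uperm_succAbove_le A (last M)
  have h_zero := add_uperm_succAbove_le A 0
  rw [uperm_abs_succAbove_last] at h_last
  rw [uperm_abs_succAbove_zero] at h_zero
  simp only [A, val_last, val_zero, Nat.cast_zero, mul_zero, add_zero] at h_last h_zero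
  exact max_le (by linarith [le_abs_self (a M + (u + 2 * M) * b M)])
    (by linarith [neg_le_abs (a M + u * b M)])

end AbsMatrix

theorem uperm_abs_eq_greedyUperm (a b : ℕ → ℝ) (hb0 : ∀ j, 0 ≤ b j) (hb : Monotone b) (M : ℕ)
    (u : ℝ) : uperm M (fun j m => |a j + (u + 2 * (m : ℕ)) * b j|) = greedyUperm a b M u := by
  induction M generalizing u with
  | zero => exact uperm_zero _
  | succ M ih =>
    refine le_antisymm (uperm_le fun τ => ?_) ?_
    · simpa only [ih, greedyUperm_succ] using sum_abs_le_max_uperm a b M u hb0 hb τ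
    · simpa only [ih, greedyUperm_succ] using max_uperm_le_uperm_abs a b M u

theorem le_greedyUperm_succ_last (a b : ℕ → ℝ) (r : ℕ) (u : ℝ) :
    a r + (u + 2 * r) * b r + greedyUperm a b r u ≤ greedyUperm a b (r + 1) u :=
  le_max_left _ _

theorem le_greedyUperm_succ_first (a b : ℕ → ℝ) (r : ℕ) (u : ℝ) :
    -(a r + u * b r) + greedyUperm a b r (u + 2) ≤ greedyUperm a b (r + 1) u :=
  le_max_right _ _

theorem max_add_max_le {α : Type*} [LinearOrder α] [Add α] {a b c d x : α} (h₁ : a + c ≤ x)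
    (h₂ : a + d ≤ x) (h₃ : b + c ≤ x) (h₄ : b + d ≤ x) : max a b + max c d ≤ x := by
  rcases max_choice a b with h | h <;> rcases max_choice c d with h' | h' <;> rw [h, h'] <;>
    assumption

theorem greedyUperm_add_le (a d b : ℕ → ℝ) (hd : Monotone d) (hd0 : 0 ≤ d 0) (r : ℕ) {u v : ℝ}
    (huv : ∃ k : ℕ, v = u + 2 * k) :
    greedyUperm a b r v + greedyUperm (a - d) b r u ≤
      greedyUperm a b r u + greedyUperm (a - d) b r v + (v - u) * d r := by
  induction r generalizing u v with
  | zero =>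
    obtain ⟨k, rfl⟩ := huv
    simpa using mul_nonneg (by positivity : (0 : ℝ) ≤ 2 * k) hd0
  | succ r ih =>
    obtain ⟨_ | k, hk⟩ := huv
    · obtain rfl : v = u := by simpa using hk
      simp
    have hvu : 2 ≤ v - u := by rw [hk]; push_cast; linarith [(k.cast_nonneg : (0 : ℝ) ≤ k)]
    have h₁ := ih ⟨k + 1, hk⟩
    have h₂ := ih (u := u + 2) (v := v) ⟨k, by rw [hk]; push_cast; ring⟩
    have h₃ := ih (u := u) (v := v + 2) ⟨k + 2, by rw [hk]; push_cast; ring⟩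
    have h₄ := ih (u := u + 2) (v := v + 2) ⟨k + 1, by rw [hk]; push_cast; ring⟩
    have hmono : (v - u) * d r ≤ (v - u) * d (r + 1) :=
      mul_le_mul_of_nonneg_left (hd r.le_succ) (by linarith)
    have C₁ := le_greedyUperm_succ_last a b r u
    have C₂ := le_greedyUperm_succ_first a b r u
    have D₁ := le_greedyUperm_succ_last (a - d) b r v
    have D₂ := le_greedyUperm_succ_first (a - d) b r v
    -- Each pair of branches on the left is bounded by a pair on the right: the terms of row `r`
    -- cancel or differ by `± 2 * d r`, which is absorbed by moving `v - u` by `∓ 2` in `ih`.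
    rw [greedyUperm_succ a b r v, greedyUperm_succ (a - d) b r u]
    simp only [Pi.sub_apply] at *
    refine max_add_max_le ?_ ?_ ?_ ?_ <;> linarith

theorem greedyUperm_add_of_eq (a e b : ℕ → ℝ) (r : ℕ) (he : ∀ j < r, e j = b j) (u : ℝ) :
    greedyUperm (a + e) b r (u - 1) = greedyUperm a b r u := by
  induction r generalizing u with
  | zero => rfl
  | succ r ih =>
    have he' : ∀ j < r, e j = b j := fun j hj => he j (hj.trans r.lt_succ_self)
    rw [greedyUperm_succ, greedyUperm_succ, ih he', show u - 1 + 2 = u + 2 - 1 by ring, ih he',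
      Pi.add_apply, he r r.lt_succ_self]
    congr 1 <;> ring

theorem greedyUperm_two_add_le (a e b : ℕ → ℝ) (hd : Monotone (b - e)) (hd0 : 0 ≤ (b - e) 0)
    (r : ℕ) (u : ℝ) :
    greedyUperm a b r (u + 2) + greedyUperm (a + e) b r (u - 1) ≤
      greedyUperm a b r u + greedyUperm (a + e) b r (u + 1) + 2 * (b r - e r) := by
  have key := greedyUperm_add_le a (b - e) b hd hd0 r (u := u) (v := u + 2) ⟨1, by norm_num⟩
  have shift (w : ℝ) : greedyUperm (a + e) b r (w - 1) = greedyUperm (a - (b - e)) b r w := by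
    rw [← greedyUperm_add_of_eq (a - (b - e)) b b r fun _ _ => rfl]; congr 1; abel
  rw [show u + 1 = u + 2 - 1 by ring, shift, shift]
  simpa using key

theorem greedyUperm_sub_two_le (a e b : ℕ → ℝ) (hs : Monotone (b + e)) (hs0 : 0 ≤ (b + e) 0)
    (r : ℕ) (u : ℝ) :
    greedyUperm a b r (u - 2) + greedyUperm (a + e) b r (u + 1) ≤
      greedyUperm a b r u + greedyUperm (a + e) b r (u - 1) + 2 * (b r + e r) := by
  have key := greedyUperm_two_add_le (a + e) (-e) b (by simpa [sub_eq_add_neg] using hs)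
    (by simpa [sub_eq_add_neg] using hs0) r (u - 1)
  rw [add_neg_cancel_right, show u - 1 + 2 = u + 1 by ring, show u - 1 - 1 = u - 2 by ring,
    sub_add_cancel, Pi.neg_apply, sub_neg_eq_add] at key
  linarith

theorem backlund_of_greedyUperm (N : ℕ) (P Q C : ℕ → ℝ) (hP0 : ∀ j, 0 ≤ P j) (hP : Monotone P)
    (hQ : ∀ j, Q j = min (P j) 1) (f g : ℝ → ℝ → ℝ)
    (hf : ∀ n i, f n i = greedyUperm (fun j => C j - Q j * i) P N n)
    (hg : ∀ n i, g n i = greedyUperm (fun j => C j - Q j * i) P (N + 1) (n - 2)) (n i : ℝ) :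
    f n i + g (n + 1) (i - 1) = max (f (n + 1) (i - 1) + g n i - P N + Q N - 2)
        (f (n - 1) (i - 1) + g (n + 2) i - P N + Q N) ∧
    f n i + g (n + 1) (i - 1) = max (f (n + 1) (i - 1) + g n i - P N - Q N)
        (f (n - 1) (i - 1) + g (n + 2) i - P N + Q N) := by
  set a : ℕ → ℝ := fun j => C j - Q j * i
  have ha : (fun j => C j - Q j * (i - 1)) = a + Q := by funext j; simp only [a, Pi.add_apply]; ring
  have hQP : ∀ j, Q j ≤ P j := fun j => (hQ j).trans_le (min_le_left _ _)
  have hQ1 : Q N ≤ 1 := (hQ N).trans_le (min_le_right _ _)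
  have hd : Monotone (P - Q) := fun j k hjk => by
    have := hP hjk
    simp only [Pi.sub_apply, hQ]
    rcases min_cases (P j) 1 with h | h <;> rcases min_cases (P k) 1 with h' | h' <;>
      linarith
  have hs : Monotone (P + Q) :=
    hP.add fun j k hjk => by simpa [hQ] using min_le_min_right 1 (hP hjk)
  have KA := greedyUperm_two_add_le a Q P hd (by simpa using hQP 0) N n
  have KB := greedyUperm_sub_two_le a Q P hs
    (add_nonneg (hP0 0) (hQ 0 ▸ le_min (hP0 0) zero_le_one)) N n
  have hcase : Q N = 1 ∨ (P N = Q N ∧ greedyUperm (a + Q) P N (n - 1) = greedyUperm a P N n ∧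
      greedyUperm (a + Q) P N (n + 1) = greedyUperm a P N (n + 2)) := by
    rcases le_total 1 (P N) with h | h
    · exact Or.inl (by rw [hQ, min_eq_right h])
    · have hQP' : ∀ j < N, Q j = P j := fun j hj => by rw [hQ, min_eq_left ((hP hj.le).trans h)]
      refine Or.inr ⟨by rw [hQ, min_eq_left h], greedyUperm_add_of_eq _ _ _ _ hQP' n, ?_⟩
      rw [show n + 1 = n + 2 - 1 by ring, greedyUperm_add_of_eq _ _ _ _ hQP']
  simp only [hf, hg, ha, show n + 1 - 2 = n - 1 by ring, show n + 2 - 2 = n by ring,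
    greedyUperm_succ, show n - 1 + 2 = n + 1 by ring, sub_add_cancel, Pi.add_apply]
  -- `KB` bounds the first branch of `g n i`, `KA` the second branch of `g (n + 2) i`, and by
  -- `hcase` the second branch of `g (n + 1) (i - 1)` is attained on the right.
  constructor <;> rcases hcase with h | ⟨h1, h2, h3⟩ <;> grind

theorem ukdv_backlund_ultradiscretized_general (N : ℕ) (p c : Fin (N + 1) → ℝ)
    (hp0 : ∀ j, 0 ≤ p j) (hpmono : Monotone p)
    (q : Fin (N + 1) → ℝ) (hq : ∀ j, q j = min (p j) 1)
    (f g : ℝ → ℝ → ℝ)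
    (hf : ∀ n i : ℝ, f n i = uperm N fun j m =>
      |p j.castSucc * (n + 2 * ((m : ℕ) : ℝ)) - q j.castSucc * i + c j.castSucc|)
    (hg : ∀ n i : ℝ, g n i = uperm (N + 1) fun j m =>
      |p j * (n + 2 * ((m : ℕ) : ℝ) - 2) - q j * i + c j|) :
    (∀ n i : ℝ,
      f n i + g (n + 1) (i - 1) =
        max (f (n + 1) (i - 1) + g n i - p (Fin.last N) + q (Fin.last N) - 2)
            (f (n - 1) (i - 1) + g (n + 2) i - p (Fin.last N) + q (Fin.last N))) ∧
    (∀ n i : ℝ,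
      (f n i + g (n + 1) (i - 1) =
        max (f (n + 1) (i - 1) + g n i - p (Fin.last N) + q (Fin.last N) - 2)
            (f (n - 1) (i - 1) + g (n + 2) i - p (Fin.last N) + q (Fin.last N))) ↔
      (f n i + g (n + 1) (i - 1) =
        max (f (n + 1) (i - 1) + g n i - p (Fin.last N) - q (Fin.last N))
            (f (n - 1) (i - 1) + g (n + 2) i - p (Fin.last N) + q (Fin.last N)))) := by
  set P : ℕ → ℝ := fun j => p (clamp j N)
  set Q : ℕ → ℝ := fun j => q (clamp j N)
  set C : ℕ → ℝ := fun j => c (clamp j N)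
  have hP : Monotone P := hpmono.comp clamp_monotone
  have hclamp (j : Fin (N + 1)) : clamp j N = j := Fin.ext (by simp [j.is_le])
  have hf' (n i : ℝ) : f n i = greedyUperm (fun j => C j - Q j * i) P N n := by
    rw [hf, ← uperm_abs_eq_greedyUperm _ _ (fun _ => hp0 _) hP]
    congr! 3 with j m
    simp only [Q, C, ← val_castSucc j, hclamp]
    ring_nf
  have hg' (n i : ℝ) : g n i = greedyUperm (fun j => C j - Q j * i) P (N + 1) (n - 2) := by
    rw [hg, ← uperm_abs_eq_greedyUperm _ _ (fun _ => hp0 _) hP]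
    congr! 3 with j m
    simp only [Q, C, hclamp]
    ring_nf
  have key := backlund_of_greedyUperm N P Q C (fun _ => hp0 _) hP (fun _ => hq _) f g hf' hg'
  rw [← hclamp (last N), val_last]
  exact ⟨fun n i => (key n i).1, fun n i => iff_of_true (key n i).1 (key n i).2⟩

theorem ukdv_backlund_ultradiscretized (N : ℕ) (hN : 1 ≤ N) (p c : Fin (N + 1) → ℝ)
    (hp0 : ∀ j, 0 ≤ p j) (hpmono : Monotone p)
    (q : Fin (N + 1) → ℝ) (hq : ∀ j, q j = min (p j) 1)
    (f g : ℝ → ℝ → ℝ)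
    (hf : ∀ n i : ℝ, f n i = uperm N fun j m =>
      |p j.castSucc * (n + 2 * ((m : ℕ) : ℝ)) - q j.castSucc * i + c j.castSucc|)
    (hg : ∀ n i : ℝ, g n i = uperm (N + 1) fun j m =>
      |p j * (n + 2 * ((m : ℕ) : ℝ) - 2) - q j * i + c j|) :
    (∀ n i : ℝ,
      f n i + g (n + 1) (i - 1) =
        max (f (n + 1) (i - 1) + g n i - p (Fin.last N) + q (Fin.last N) - 2)
            (f (n - 1) (i - 1) + g (n + 2) i - p (Fin.last N) + q (Fin.last N))) ∧
    (∀ n i : ℝ,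
      (f n i + g (n + 1) (i - 1) =
        max (f (n + 1) (i - 1) + g n i - p (Fin.last N) + q (Fin.last N) - 2)
            (f (n - 1) (i - 1) + g (n + 2) i - p (Fin.last N) + q (Fin.last N))) ↔
      (f n i + g (n + 1) (i - 1) =
        max (f (n + 1) (i - 1) + g n i - p (Fin.last N) - q (Fin.last N))
            (f (n - 1) (i - 1) + g (n + 2) i - p (Fin.last N) + q (Fin.last N)))) :=
  ukdv_backlund_ultradiscretized_general N p c hp0 hpmono q hq f g hf hg
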